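/- arXiv:0809.1411 — 2 statements merged into one kernel-verified Lean document; each statement's English description precedes it below -/
import Mathlib

section
/- The matrices M(2), M(3), M(4), … generate a free submonoid of SL₂(ℤ): if α₁,…,α_l and β₁,…,β_m are integers all ≥ 2 with M(α₁)⋯M(α_l) = M(β₁)⋯M(β_m), then l = m and α_i = β_i for all i. -/
/-!
Right multiplication by `M(a)` sends the bottom row `(c, d)` of a matrix to `(d, a d - c)`.
Hence the bottom row of a product of matrices `M(α)` with all `α ≥ 2` satisfies `0 ≤ c < d`,
and `c > 0` unless the product is empty. If two such products agree, then `P * M(a) = Q * M(b)`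
forces `P` and `Q` to have the same `d`, and `(a - b) d` is a difference of two numbers in
`[0, d)`, so `a = b`. Since `M(a)` is invertible, one cancels the last letter and inducts.
-/

/-- The matrix `M(α) = !![0, -1; 1, α]`. -/
def Mmat (a : ℤ) : Matrix (Fin 2) (Fin 2) ℤ := !![0, -1; 1, a]

section

variable {m : Type*}

@[simp]
lemma mul_Mmat_apply_zero (Q : Matrix m (Fin 2) ℤ) (a : ℤ) (i : m) :
    (Q * Mmat a) i 0 = Q i 1 := by
  simp [Mmat, Matrix.mul_apply, Fin.sum_univ_two]

@[simp]
lemma mul_Mmat_apply_one (Q : Matrix m (Fin 2) ℤ) (a : ℤ) (i : m) :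
    (Q * Mmat a) i 1 = a * Q i 1 - Q i 0 := by
  simp [Mmat, Matrix.mul_apply, Fin.sum_univ_two]
  ring

end

lemma isUnit_Mmat (a : ℤ) : IsUnit (Mmat a) :=
  (Matrix.isUnit_iff_isUnit_det _).mpr (by simp [Mmat, Matrix.det_fin_two])

lemma prod_map_Mmat_bottom_row (L : List ℤ) (hL : ∀ x ∈ L, 2 ≤ x) :
    0 ≤ (L.map Mmat).prod 1 0 ∧ (L.map Mmat).prod 1 0 < (L.map Mmat).prod 1 1 := by
  induction L using List.reverseRecOn with
  | nil => simp
  | append_singleton K a ih =>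
    have ha : 2 ≤ a := hL a (by simp)
    obtain ⟨hc, hcd⟩ := ih fun x hx => hL x (by simp [hx])
    simp only [List.map_append, List.map_singleton, List.prod_append, List.prod_singleton,
      mul_Mmat_apply_zero, mul_Mmat_apply_one]
    constructor <;> nlinarith

lemma prod_map_Mmat_ne_one (L : List ℤ) (hL : ∀ x ∈ L, 2 ≤ x) (hne : L ≠ []) :
    (L.map Mmat).prod ≠ 1 := by
  obtain ⟨K, a, rfl⟩ := List.eq_nil_or_concat L |>.resolve_left hne
  have hK := prod_map_Mmat_bottom_row K fun x hx => hL x (by simp [hx])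
  intro h
  have h10 := congrFun (congrFun h 1) 0
  simp only [List.concat_eq_append, List.map_append, List.map_singleton, List.prod_append,
    List.prod_singleton, mul_Mmat_apply_zero] at h10
  simp [h10] at hK
  omega

lemma eq_of_mul_Mmat_eq_mul_Mmat {P Q : Matrix (Fin 2) (Fin 2) ℤ} {a b : ℤ}
    (hP : 0 ≤ P 1 0 ∧ P 1 0 < P 1 1) (hQ : 0 ≤ Q 1 0 ∧ Q 1 0 < Q 1 1)
    (h : P * Mmat a = Q * Mmat b) : a = b ∧ P = Q := by
  have hd : P 1 1 = Q 1 1 := by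
    simpa using congrFun (congrFun h 1) 0
  have hcd : P 1 0 - Q 1 0 = (a - b) * P 1 1 := by
    have := congrFun (congrFun h 1) 1
    simp only [mul_Mmat_apply_one] at this
    rw [hd] at this ⊢
    linarith
  have hzero : P 1 0 - Q 1 0 = 0 :=
    Int.eq_zero_of_abs_lt_dvd ⟨a - b, by rw [hcd, mul_comm]⟩
      (abs_sub_lt_iff.mpr ⟨by omega, by omega⟩)
  have hab : a = b := by
    rw [hcd] at hzero
    have := (mul_eq_zero.mp hzero).resolve_right (by omega)
    omega
  subst hab
  exact ⟨rfl, (isUnit_Mmat a).mul_left_inj.mp h⟩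

/-- The monoid generated by `M(2), M(3), …` is free: equal products imply equal words. -/
theorem stmt10 (L₁ L₂ : List ℤ) (h₁ : ∀ x ∈ L₁, 2 ≤ x) (h₂ : ∀ x ∈ L₂, 2 ≤ x)
    (h : (L₁.map Mmat).prod = (L₂.map Mmat).prod) : L₁ = L₂ := by
  induction L₁ using List.reverseRecOn generalizing L₂ with
  | nil =>
    by_contra hne
    exact prod_map_Mmat_ne_one L₂ h₂ (Ne.symm hne) (by simpa using h.symm)
  | append_singleton K a ih =>
    obtain rfl | ⟨K', b, rfl⟩ := List.eq_nil_or_concat L₂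
    · exact absurd (by simpa using h) (prod_map_Mmat_ne_one _ h₁ (by simp))
    have hK : ∀ x ∈ K, 2 ≤ x := fun x hx => h₁ x (by simp [hx])
    have hK' : ∀ x ∈ K', 2 ≤ x := fun x hx => h₂ x (by simp [hx])
    simp only [List.concat_eq_append, List.map_append, List.map_singleton, List.prod_append,
      List.prod_singleton] at h
    obtain ⟨rfl, hprod⟩ := eq_of_mul_Mmat_eq_mul_Mmat
      (prod_map_Mmat_bottom_row K hK) (prod_map_Mmat_bottom_row K' hK') h
    rw [ih K' hK hK' hprod, List.concat_eq_append]
end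

section
/- Let N ≥ 4 and let a ∈ {2,…,N−2} be invertible modulo N, and set λ = ⌊a/(N−a)⌋. Then W(a,N) equals the sequence W((λ+1)a − λN, λa − (λ−1)N) followed by the constant sequence 2,2,…,2 of length λ. -/
/-- `IsW a N L` says that `L` is the word `W(a,N)`: a nonempty finite sequence of
integers `≥ 2` whose `M`-product is the matrix `!![-x, -y; a, N]` where
`y ∈ {1,…,N-1}` satisfies `a*y ≡ 1 (mod N)` and `x = (a*y-1)/N`. -/
def IsW (a N : ℤ) (L : List ℤ) : Prop :=
  L ≠ [] ∧ (∀ x ∈ L, 2 ≤ x) ∧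
  ∃ y : ℤ, 1 ≤ y ∧ y ≤ N - 1 ∧ a * y ≡ 1 [ZMOD N] ∧
    (L.map Mmat).prod = !![-((a * y - 1) / N), -y; a, N]


/-!
Appending a letter `2` to a word multiplies its matrix `!![-x, -y; A, B]` on the right by
`M(2)`, giving `!![-y, x - 2y; B, 2B - A]`: the bottom row `(A, B)` becomes `(B, 2B - A)`, which
keeps the difference `B - A` and shifts both entries by it. Starting from
`(A, B) = ((λ+1)a - λN, λa - (λ-1)N)`, whose difference is `N - a`, after `λ` letters `2` the
bottom row is `(a, N)`. The bounds `1 ≤ y ≤ N - 1` survive each step because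
`0 < y - x ≤ B - A` follows from `A y - B x = 1` and `1 ≤ y ≤ B - 1` once `A < B`.
-/

theorem isW_iff_det {a N : ℤ} {L : List ℤ} :
    IsW a N L ↔ L ≠ [] ∧ (∀ x ∈ L, 2 ≤ x) ∧ ∃ x y : ℤ, 1 ≤ y ∧ y ≤ N - 1 ∧
      a * y - N * x = 1 ∧ (L.map Mmat).prod = !![-x, -y; a, N] := by
  refine and_congr_right fun _ => and_congr_right fun _ => ⟨?_, ?_⟩
  · rintro ⟨y, hy1, hyN, hcong, hprod⟩
    have hdvd : N ∣ a * y - 1 := hcong.symm.dvd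
    refine ⟨(a * y - 1) / N, y, hy1, hyN, ?_, hprod⟩
    rw [Int.mul_ediv_cancel' hdvd]
    ring
  · rintro ⟨x, y, hy1, hyN, hdet, hprod⟩
    have hx : (a * y - 1) / N = x := by
      rw [show a * y - 1 = N * x by linarith, Int.mul_ediv_cancel_left _ (by omega)]
    refine ⟨y, hy1, hyN, ?_, hx ▸ hprod⟩
    exact Int.modEq_iff_dvd.mpr ⟨-x, by linarith⟩

theorem IsW.append_two {A B : ℤ} {L : List ℤ} (h : IsW A B L) (hAB : A < B) :
    IsW B (2 * B - A) (L ++ [2]) := by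
  obtain ⟨-, hge, x, y, hy1, hyB, hdet, hprod⟩ := isW_iff_det.mp h
  have hxy : x < y := by nlinarith
  have hyx : y - x ≤ B - A := by nlinarith
  refine isW_iff_det.mpr ⟨by simp, ?_, y, 2 * y - x, by omega, by omega, by linarith, ?_⟩
  · intro z hz
    rcases List.mem_append.mp hz with hz | hz
    · exact hge z hz
    · rw [List.mem_singleton.mp hz]
  · rw [List.map_append, List.prod_append, hprod]
    ext i j
    fin_cases i <;> fin_cases j <;> simp [Mmat] <;> ring

theorem IsW.append_replicate_two {A B : ℤ} {L : List ℤ} (h : IsW A B L) (hAB : A < B) (k : ℕ) :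
    IsW (A + k * (B - A)) (B + k * (B - A)) (L ++ List.replicate k 2) := by
  induction k with
  | zero => simpa using h
  | succ k ih =>
    rw [List.replicate_succ', ← List.append_assoc]
    convert ih.append_two (by linarith) using 1 <;> push_cast <;> ring

theorem stmt17_general (N a lam : ℤ) (ha : 2 ≤ a) (ha' : a ≤ N - 2)
    (hlam : lam = a / (N - a))
    (L : List ℤ) (hL : IsW ((lam + 1) * a - lam * N) (lam * a - (lam - 1) * N) L) :
    IsW a N (L ++ List.replicate lam.toNat 2) := by
  have hlam0 : 0 ≤ lam := hlam ▸ Int.ediv_nonneg (by omega) (by omega)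
  have h := hL.append_replicate_two (by linarith) lam.toNat
  rw [Int.toNat_of_nonneg hlam0] at h
  convert h using 1 <;> ring

theorem stmt17 (N a lam : ℤ) (hN : 4 ≤ N) (ha : 2 ≤ a) (ha' : a ≤ N - 2)
    (hcop : IsCoprime a N) (hlam : lam = a / (N - a))
    (L : List ℤ) (hL : IsW ((lam + 1) * a - lam * N) (lam * a - (lam - 1) * N) L) :
    IsW a N (L ++ List.replicate lam.toNat 2) :=
  stmt17_general N a lam ha ha' hlam L hL
end
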